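/- Composition of effects is associative: for mappings E1, E2, E3 from a finite state set Q into normalised families of subsets of Q, (E1 ∘ E2) ∘ E3 = E1 ∘ (E2 ∘ E3). -/
import Mathlib


/-- Keep only the inclusion-minimal members of a family of sets. -/
def minFam {Q : Type*} (D : Set (Set Q)) : Set (Set Q) :=
  { X ∈ D | ∀ Y ∈ D, ¬ Y ⊂ X }

/-- A family is normalised if it equals its own minimisation. -/
def Normalised {Q : Type*} (D : Set (Set Q)) : Prop :=
  minFam D = D

/-- `Mix` of the indexed family `{D i | i ∈ I}`: all inclusion-minimal unions of one
representative set per index. -/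
def mixOver {ι Q : Type*} (I : Set ι) (D : ι → Set (Set Q)) : Set (Set Q) :=
  minFam { S | ∃ f : ι → Set Q, (∀ i ∈ I, f i ∈ D i) ∧ S = ⋃ i ∈ I, f i }

/-- Composition of effects: `(E1 ∘ E2)(q) = min ⋃_{X ∈ E1 q} Mix({E2 q' | q' ∈ X})`. -/
def compE {Q : Type*} (E1 E2 : Q → Set (Set Q)) (q : Q) : Set (Set Q) :=
  minFam (⋃ X ∈ E1 q, mixOver X E2)

section Aux

variable {Q : Type*}

/-- Raw (un-minimised) mix. -/
def rawMix (I : Set Q) (D : Q → Set (Set Q)) : Set (Set Q) :=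
  { S | ∃ f : Q → Set Q, (∀ i ∈ I, f i ∈ D i) ∧ S = ⋃ i ∈ I, f i }

/-- Raw (un-minimised) composition. -/
def rawC (E1 E2 : Q → Set (Set Q)) (q : Q) : Set (Set Q) :=
  { S | ∃ X ∈ E1 q, S ∈ rawMix X E2 }

/-- Mutual cofinality of two families. -/
def Cof (C D : Set (Set Q)) : Prop :=
  (∀ c ∈ C, ∃ d ∈ D, d ⊆ c) ∧ (∀ d ∈ D, ∃ c ∈ C, c ⊆ d)

lemma Cof.symm' {C D : Set (Set Q)} (h : Cof C D) : Cof D C := ⟨h.2, h.1⟩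

lemma cof_refl (D : Set (Set Q)) : Cof D D :=
  ⟨fun c hc => ⟨c, hc, subset_rfl⟩, fun d hd => ⟨d, hd, subset_rfl⟩⟩

lemma minFam_subset_of_cof {C D : Set (Set Q)} (h : Cof C D) :
    minFam C ⊆ minFam D := by
  rintro X ⟨hXC, hmin⟩
  obtain ⟨d, hdD, hdX⟩ := h.1 X hXC
  obtain ⟨c, hcC, hcd⟩ := h.2 d hdD
  have hcX : c = X := by
    by_contra hne
    exact hmin c hcC (ssubset_of_subset_of_ne (hcd.trans hdX) hne)
  have hdXeq : d = X := subset_antisymm hdX (hcX ▸ hcd)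
  refine ⟨hdXeq ▸ hdD, ?_⟩
  intro Y hYD hYX
  obtain ⟨c', hc'C, hc'Y⟩ := h.2 Y hYD
  exact hmin c' hc'C (lt_of_le_of_lt hc'Y hYX)

lemma minFam_eq_of_cof {C D : Set (Set Q)} (h : Cof C D) :
    minFam C = minFam D :=
  subset_antisymm (minFam_subset_of_cof h) (minFam_subset_of_cof h.symm')

lemma exists_minFam_le [Finite Q] {D : Set (Set Q)} {S : Set Q} (hS : S ∈ D) :
    ∃ m ∈ minFam D, m ⊆ S := by
  obtain ⟨m, ⟨hmD, hmS⟩, hmin⟩ :=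
    (wellFounded_lt (α := Set Q)).has_min {T | T ∈ D ∧ T ⊆ S} ⟨S, hS, subset_rfl⟩
  refine ⟨m, ⟨hmD, ?_⟩, hmS⟩
  intro Y hYD hYm
  exact hmin Y ⟨hYD, hYm.subset.trans hmS⟩ hYm

lemma cof_minFam [Finite Q] (D : Set (Set Q)) : Cof (minFam D) D :=
  ⟨fun c hc => ⟨c, hc.1, subset_rfl⟩, fun d hd => exists_minFam_le hd⟩

lemma compE_eq_raw [Finite Q] (A B : Q → Set (Set Q)) (q : Q) :
    compE A B q = minFam (rawC A B q) := by
  apply minFam_eq_of_cof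
  constructor
  · rintro c hc
    rw [Set.mem_iUnion₂] at hc
    obtain ⟨X, hX, hc⟩ := hc
    exact ⟨c, ⟨X, hX, hc.1⟩, subset_rfl⟩
  · rintro d ⟨X, hX, hd⟩
    obtain ⟨m, hm, hmd⟩ := exists_minFam_le (D := rawMix X B) hd
    exact ⟨m, Set.mem_iUnion₂.2 ⟨X, hX, hm⟩, hmd⟩

lemma rawC_le {A A' B B' : Q → Set (Set Q)} {q : Q}
    (hA : ∀ X ∈ A q, ∃ X' ∈ A' q, X' ⊆ X)
    (hB : ∀ i : Q, ∀ y ∈ B i, ∃ y' ∈ B' i, y' ⊆ y) :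
    ∀ S ∈ rawC A B q, ∃ S' ∈ rawC A' B' q, S' ⊆ S := by
  rintro S ⟨X, hX, f, hf, rfl⟩
  obtain ⟨X', hX', hXX⟩ := hA X hX
  have key : ∀ i : Q, ∃ y, i ∈ X' → y ∈ B' i ∧ y ⊆ f i := by
    intro i
    by_cases hi : i ∈ X'
    · obtain ⟨y, hy, hyf⟩ := hB i (f i) (hf i (hXX hi))
      exact ⟨y, fun _ => ⟨hy, hyf⟩⟩
    · exact ⟨∅, fun h => absurd h hi⟩
  choose f' hf' using key
  refine ⟨⋃ i ∈ X', f' i, ⟨X', hX', f', fun i hi => (hf' i hi).1, rfl⟩, ?_⟩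
  exact Set.iUnion₂_subset fun i hi =>
    ((hf' i hi).2).trans (Set.subset_biUnion_of_mem (hXX hi))

lemma rawC_cof {A A' B B' : Q → Set (Set Q)}
    (hA : ∀ q', Cof (A q') (A' q')) (hB : ∀ i, Cof (B i) (B' i)) (q : Q) :
    Cof (rawC A B q) (rawC A' B' q) :=
  ⟨rawC_le (fun X hX => (hA q).1 X hX) (fun i y hy => (hB i).1 y hy),
   rawC_le (fun X hX => (hA q).2 X hX) (fun i y hy => (hB i).2 y hy)⟩

lemma rawC_assoc_cof (E1 E2 E3 : Q → Set (Set Q)) (q : Q) :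
    Cof (rawC (rawC E1 E2) E3 q) (rawC E1 (rawC E2 E3) q) := by
  constructor
  · rintro S ⟨X', ⟨X, hX, f, hf, rfl⟩, g, hg, rfl⟩
    refine ⟨⋃ q1 ∈ X, ⋃ q2 ∈ f q1, g q2,
      ⟨X, hX, fun q1 => ⋃ q2 ∈ f q1, g q2,
        fun q1 hq1 => ⟨f q1, hf q1 hq1, g,
          fun q2 hq2 => hg q2 (Set.mem_biUnion hq1 hq2), rfl⟩, rfl⟩, ?_⟩
    intro x hx
    simp only [Set.mem_iUnion] at hx ⊢
    obtain ⟨q1, hq1, q2, hq2, hx⟩ := hx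
    exact ⟨q2, ⟨q1, hq1, hq2⟩, hx⟩
  · rintro S ⟨X, hX, F, hF, rfl⟩
    have key : ∀ q1 : Q, ∃ Y : Set Q, ∃ g : Q → Set Q, q1 ∈ X →
        Y ∈ E2 q1 ∧ (∀ q2 ∈ Y, g q2 ∈ E3 q2) ∧ F q1 = ⋃ q2 ∈ Y, g q2 := by
      intro q1
      by_cases hq1 : q1 ∈ X
      · obtain ⟨Y, hY, g, hg, hFq⟩ := hF q1 hq1
        exact ⟨Y, g, fun _ => ⟨hY, hg, hFq⟩⟩
      · exact ⟨∅, fun _ => ∅, fun h => absurd h hq1⟩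
    choose Y g hYg using key
    set X' : Set Q := ⋃ q1 ∈ X, Y q1 with hX'
    have key2 : ∀ q2 : Q, ∃ z : Set Q, q2 ∈ X' →
        z ∈ E3 q2 ∧ z ⊆ ⋃ q1 ∈ X, F q1 := by
      intro q2
      by_cases hq2 : q2 ∈ X'
      · obtain ⟨q1, hq1, hq2Y⟩ := Set.mem_iUnion₂.1 hq2
        obtain ⟨hY, hg, hFq⟩ := hYg q1 hq1
        refine ⟨g q1 q2, fun _ => ⟨hg q2 hq2Y, ?_⟩⟩
        have : g q1 q2 ⊆ F q1 := hFq ▸ Set.subset_biUnion_of_mem hq2Y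
        exact this.trans (Set.subset_biUnion_of_mem hq1)
      · exact ⟨∅, fun h => absurd h hq2⟩
    choose g' hg' using key2
    refine ⟨⋃ q2 ∈ X', g' q2,
      ⟨X', ⟨X, hX, Y, fun q1 hq1 => (hYg q1 hq1).1, rfl⟩,
        g', fun q2 hq2 => (hg' q2 hq2).1, rfl⟩, ?_⟩
    exact Set.iUnion₂_subset fun q2 hq2 => (hg' q2 hq2).2

end Aux

/-- composition of effects is associative for mappings from a finite state
set into normalised families of subsets of `Q`. -/
theorem compE_assoc {Q : Type} [Fintype Q] (E1 E2 E3 : Q → Set (Set Q))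
    (h1 : ∀ q, Normalised (E1 q)) (h2 : ∀ q, Normalised (E2 q))
    (h3 : ∀ q, Normalised (E3 q)) :
    compE (compE E1 E2) E3 = compE E1 (compE E2 E3) := by
  funext q
  have c12 : ∀ q', Cof (compE E1 E2 q') (rawC E1 E2 q') := fun q' => by
    rw [compE_eq_raw]; exact cof_minFam _
  have c23 : ∀ q', Cof (compE E2 E3 q') (rawC E2 E3 q') := fun q' => by
    rw [compE_eq_raw]; exact cof_minFam _
  calc compE (compE E1 E2) E3 q
      = minFam (rawC (compE E1 E2) E3 q) := compE_eq_raw _ _ q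
    _ = minFam (rawC (rawC E1 E2) E3 q) :=
        minFam_eq_of_cof (rawC_cof c12 (fun i => cof_refl _) q)
    _ = minFam (rawC E1 (rawC E2 E3) q) :=
        minFam_eq_of_cof (rawC_assoc_cof E1 E2 E3 q)
    _ = minFam (rawC E1 (compE E2 E3) q) :=
        (minFam_eq_of_cof (rawC_cof (fun _ => cof_refl _) c23 q)).symm
    _ = compE E1 (compE E2 E3) q := (compE_eq_raw _ _ q).symm
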